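/- Let A ∈ [0,1], p ∈ [0,1], and let ρ_A = [[(1+A)/2, −(i/2)√(1−A²)], [(i/2)√(1−A²), (1−A)/2]]. Let ε_D be the dephasing channel with Kraus operators E₀ = √(1−p/2)·I and E₁ = √(p/2)·diag(1,−1). Then the decay of both the l₁-norm imaginarity measure and the robustness of imaginarity satisfies F_{l₁}(ρ_A) − F_{l₁}(ε_D(ρ_A)) = F_R(ρ_A) − F_R(ε_D(ρ_A)) = p√(1−A²). -/

import Mathlib

open Matrix Kronecker BigOperators
open scoped ComplexOrder

noncomputable section

/-- A density matrix: positive semidefinite with trace 1. -/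
def IsDensityMatrix {n : Type*} [Fintype n] [DecidableEq n] (ρ : Matrix n n ℂ) : Prop :=
  ρ.PosSemidef ∧ ρ.trace = 1

/-- The l₁-norm imaginarity measure: sum of |Im ρᵢⱼ| over off-diagonal entries. -/
noncomputable def Fl1 {n : Type*} [Fintype n] [DecidableEq n] (ρ : Matrix n n ℂ) : ℝ :=
  ∑ i, ∑ j, if i = j then 0 else |(ρ i j).im|

/-- The square root of a positive semidefinite matrix (Mathlib's former `Matrix.PosSemidef.sqrt`,
since removed; restated here with its old definition). -/
noncomputable def Matrix.PosSemidef.sqrt {n : Type*} [Fintype n] [DecidableEq n] {A : Matrix n n ℂ}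
    (hA : A.PosSemidef) : Matrix n n ℂ :=
  (hA.1.eigenvectorUnitary : Matrix n n ℂ) * diagonal ((↑) ∘ (Real.sqrt ·) ∘ hA.1.eigenvalues) *
    (star hA.1.eigenvectorUnitary : Matrix n n ℂ)

/-- The trace norm ‖M‖₁ = Tr √(M†M). -/
noncomputable def traceNorm {n : Type*} [Fintype n] [DecidableEq n] (M : Matrix n n ℂ) : ℝ :=
  ((Matrix.posSemidef_conjTranspose_mul_self M).sqrt.trace).re

/-- The robustness of imaginarity: (1/2)‖ρ − ρᵀ‖₁. -/
noncomputable def FR {n : Type*} [Fintype n] [DecidableEq n] (ρ : Matrix n n ℂ) : ℝ :=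
  traceNorm (ρ - ρᵀ) / 2

/-- Von Neumann entropy (base-2), via eigenvalues of a Hermitian matrix
(junk value 0 if not Hermitian). -/
noncomputable def vnEntropy {n : Type*} [Fintype n] [DecidableEq n] (σ : Matrix n n ℂ) : ℝ :=
  if h : σ.IsHermitian then -∑ j, (h.eigenvalues j) * Real.logb 2 (h.eigenvalues j) else 0

/-- The relative entropy of imaginarity: S(Re ρ) − S(ρ), Re ρ = (ρ + ρᵀ)/2. -/
noncomputable def Fr {n : Type*} [Fintype n] [DecidableEq n] (ρ : Matrix n n ℂ) : ℝ :=
  vnEntropy ((1/2 : ℂ) • (ρ + ρᵀ)) - vnEntropy ρ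

/-- The canonical single-qubit state ρ_A. -/
noncomputable def rhoA (A : ℝ) : Matrix (Fin 2) (Fin 2) ℂ :=
  !![(((1 + A) / 2 : ℝ) : ℂ), -(Complex.I / 2) * (Real.sqrt (1 - A ^ 2) : ℂ);
     (Complex.I / 2) * (Real.sqrt (1 - A ^ 2) : ℂ), (((1 - A) / 2 : ℝ) : ℂ)]

/-- Density matrix of the maximal imaginary state |+⟩ = (|0⟩ + i|1⟩)/√2. -/
noncomputable def Mplus : Matrix (Fin 2) (Fin 2) ℂ :=
  (1/2 : ℂ) • !![1, -Complex.I; Complex.I, 1]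

/-- The dephasing channel. -/
noncomputable def dephasing (p : ℝ) (ρ : Matrix (Fin 2) (Fin 2) ℂ) : Matrix (Fin 2) (Fin 2) ℂ :=
  ((Real.sqrt (1 - p/2) : ℂ) • (1 : Matrix (Fin 2) (Fin 2) ℂ)) * ρ *
    ((Real.sqrt (1 - p/2) : ℂ) • (1 : Matrix (Fin 2) (Fin 2) ℂ))ᴴ +
  ((Real.sqrt (p/2) : ℂ) • !![1, 0; 0, -1]) * ρ * ((Real.sqrt (p/2) : ℂ) • !![1, 0; 0, -1])ᴴ

/-! For a Hermitian qubit matrix ρ one has ρ - ρᵀ = 2 Im(ρ₁₀) σ_y with σ_y unitary, so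
`‖ρ - ρᵀ‖₁ = 4 |Im ρ₁₀|` and the robustness of imaginarity equals the l₁-measure on such
matrices. The dephasing channel keeps the diagonal and scales the off-diagonal entries by
`1 - p`, so both measures drop from `√(1 - A²)` at ρ_A to `(1 - p) √(1 - A²)`. -/

namespace Matrix

variable {n : Type*} [Fintype n] [DecidableEq n]

lemma IsHermitian.eigenvalues_eq_of_eq_smul_one {A : Matrix n n ℂ} (hA : A.IsHermitian) {a : ℝ}
    (h : A = (a : ℂ) • 1) (i : n) : hA.eigenvalues i = a := by
  have hdiag : diagonal (RCLike.ofReal ∘ hA.eigenvalues) = diagonal fun _ ↦ (a : ℂ) := by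
    rw [← hA.conjStarAlgAut_star_eigenvectorUnitary,
      congrArg (Unitary.conjStarAlgAut ℂ _ (star hA.eigenvectorUnitary)) h,
      map_smul, map_one, smul_one_eq_diagonal]
  simpa using congrFun (congrFun hdiag i) i

lemma PosSemidef.sqrt_eq_smul_one {A : Matrix n n ℂ} (hA : A.PosSemidef) {a : ℝ}
    (h : A = (a : ℂ) • 1) : hA.sqrt = (Real.sqrt a : ℂ) • 1 := by
  have hdiag : (diagonal ((↑) ∘ (Real.sqrt ·) ∘ hA.1.eigenvalues) : Matrix n n ℂ) =
      (Real.sqrt a : ℂ) • 1 := by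
    rw [smul_one_eq_diagonal]
    congr 1
    funext i
    simp [hA.1.eigenvalues_eq_of_eq_smul_one h]
  rw [PosSemidef.sqrt, hdiag, Matrix.mul_smul, mul_one, Matrix.smul_mul,
    Unitary.mul_star_self_of_mem (SetLike.coe_mem _)]

end Matrix

lemma traceNorm_of_conjTranspose_mul_self_eq_smul_one {n : Type*} [Fintype n] [DecidableEq n]
    {M : Matrix n n ℂ} {a : ℝ} (h : Mᴴ * M = (a : ℂ) • 1) :
    traceNorm M = Fintype.card n * Real.sqrt a := by
  rw [traceNorm, PosSemidef.sqrt_eq_smul_one _ h]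
  simp [trace_smul, mul_comm]

def pauliY : Matrix (Fin 2) (Fin 2) ℂ :=
  !![0, -Complex.I; Complex.I, 0]

lemma conjTranspose_pauliY_mul_self : pauliYᴴ * pauliY = 1 := by
  ext i j
  fin_cases i <;> fin_cases j <;> simp [pauliY, mul_apply, Fin.sum_univ_two]

lemma traceNorm_real_smul_pauliY (c : ℝ) : traceNorm ((c : ℂ) • pauliY) = 2 * |c| := by
  have h : ((c : ℂ) • pauliY)ᴴ * ((c : ℂ) • pauliY) = ((c ^ 2 : ℝ) : ℂ) • 1 := by
    rw [conjTranspose_smul, smul_mul_smul_comm, conjTranspose_pauliY_mul_self]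
    simp [sq]
  rw [traceNorm_of_conjTranspose_mul_self_eq_smul_one h, Real.sqrt_sq_eq_abs]
  simp

lemma Fl1_fin_two (ρ : Matrix (Fin 2) (Fin 2) ℂ) : Fl1 ρ = |(ρ 0 1).im| + |(ρ 1 0).im| := by
  simp [Fl1, Fin.sum_univ_two]

lemma Matrix.IsHermitian.sub_transpose_eq_smul_pauliY {ρ : Matrix (Fin 2) (Fin 2) ℂ}
    (hρ : ρ.IsHermitian) : ρ - ρᵀ = ((2 * (ρ 1 0).im : ℝ) : ℂ) • pauliY := by
  have h01 : ρ 0 1 = star (ρ 1 0) := (hρ.apply 0 1).symm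
  ext i j
  fin_cases i <;> fin_cases j <;> simp [pauliY, h01, Complex.ext_iff] <;> ring

lemma FR_eq_Fl1_of_isHermitian {ρ : Matrix (Fin 2) (Fin 2) ℂ} (hρ : ρ.IsHermitian) :
    FR ρ = Fl1 ρ := by
  have h01 : (ρ 0 1).im = -(ρ 1 0).im := by simp [← hρ.apply 0 1]
  rw [FR, hρ.sub_transpose_eq_smul_pauliY, traceNorm_real_smul_pauliY, Fl1_fin_two, h01,
    abs_neg, abs_mul, abs_two]
  ring

lemma isHermitian_dephasing (p : ℝ) {ρ : Matrix (Fin 2) (Fin 2) ℂ} (hρ : ρ.IsHermitian) :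
    (dephasing p ρ).IsHermitian :=
  (isHermitian_mul_mul_conjTranspose _ hρ).add (isHermitian_mul_mul_conjTranspose _ hρ)

lemma dephasing_eq {p : ℝ} (hp0 : 0 ≤ p) (hp2 : p ≤ 2) (ρ : Matrix (Fin 2) (Fin 2) ℂ) :
    dephasing p ρ = ((1 - p / 2 : ℝ) : ℂ) • ρ +
      ((p / 2 : ℝ) : ℂ) • (!![1, 0; 0, -1] * ρ * !![1, 0; 0, -1]) := by
  have hZ : (!![1, 0; 0, -1] : Matrix (Fin 2) (Fin 2) ℂ)ᴴ = !![1, 0; 0, -1] := by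
    ext i j
    fin_cases i <;> fin_cases j <;> simp
  have hsq : ∀ {x : ℝ}, 0 ≤ x → star (Real.sqrt x : ℂ) * (Real.sqrt x : ℂ) = x := fun hx ↦ by
    rw [Complex.star_def, Complex.conj_ofReal, ← Complex.ofReal_mul, Real.mul_self_sqrt hx]
  simp only [dephasing, conjTranspose_smul, conjTranspose_one, hZ, Matrix.smul_mul,
    Matrix.mul_smul, Matrix.one_mul, Matrix.mul_one, smul_smul, hsq (x := 1 - p / 2) (by linarith),
    hsq (x := p / 2) (by linarith)]

lemma dephasing_apply {p : ℝ} (hp0 : 0 ≤ p) (hp2 : p ≤ 2) (ρ : Matrix (Fin 2) (Fin 2) ℂ)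
    (i j : Fin 2) : dephasing p ρ i j = if i = j then ρ i j else ((1 - p : ℝ) : ℂ) * ρ i j := by
  rw [dephasing_eq hp0 hp2]
  simp only [Matrix.add_apply, Matrix.smul_apply, mul_apply, Fin.sum_univ_two]
  fin_cases i <;> fin_cases j <;> simp <;> ring

lemma Fl1_dephasing {p : ℝ} (hp0 : 0 ≤ p) (hp1 : p ≤ 1) (ρ : Matrix (Fin 2) (Fin 2) ℂ) :
    Fl1 (dephasing p ρ) = (1 - p) * Fl1 ρ := by
  simp only [Fl1_fin_two, dephasing_apply hp0 (by linarith)]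
  simp [abs_mul, abs_of_nonneg (sub_nonneg.2 hp1), mul_add]

lemma isHermitian_rhoA (A : ℝ) : (rhoA A).IsHermitian := by
  ext i j
  fin_cases i <;> fin_cases j <;> simp [rhoA, Complex.ext_iff] <;> ring

lemma Fl1_rhoA (A : ℝ) : Fl1 (rhoA A) = Real.sqrt (1 - A ^ 2) := by
  norm_num [Fl1_fin_two, rhoA, abs_of_nonneg (Real.sqrt_nonneg _), ← add_mul]

theorem decay_dephasing_general (A p : ℝ) (hp0 : 0 ≤ p) (hp1 : p ≤ 1) :
    Fl1 (rhoA A) - Fl1 (dephasing p (rhoA A)) = p * Real.sqrt (1 - A ^ 2) ∧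
    FR (rhoA A) - FR (dephasing p (rhoA A)) = p * Real.sqrt (1 - A ^ 2) := by
  have hρ := isHermitian_rhoA A
  have hFl1 : Fl1 (rhoA A) - Fl1 (dephasing p (rhoA A)) = p * Real.sqrt (1 - A ^ 2) := by
    rw [Fl1_dephasing hp0 hp1, Fl1_rhoA]
    ring
  refine ⟨hFl1, ?_⟩
  rwa [FR_eq_Fl1_of_isHermitian hρ, FR_eq_Fl1_of_isHermitian (isHermitian_dephasing p hρ)]

/-- decay of F_{l₁} and F_R under the dephasing channel. -/
theorem decay_dephasing (A p : ℝ) (hA0 : 0 ≤ A) (hA1 : A ≤ 1) (hp0 : 0 ≤ p) (hp1 : p ≤ 1) :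
    Fl1 (rhoA A) - Fl1 (dephasing p (rhoA A)) = p * Real.sqrt (1 - A ^ 2) ∧
    FR (rhoA A) - FR (dephasing p (rhoA A)) = p * Real.sqrt (1 - A ^ 2) :=
  decay_dephasing_general A p hp0 hp1
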